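/- arXiv:2107.06389 — 5 statements merged into one kernel-verified Lean document; each statement's English description precedes it below -/
import Mathlib

section
/- For all positive integers d and k, Hölder's formula holds: φ(d) · μ(d / gcd(d,k)) / φ(d / gcd(d,k)) = ∑_{m | gcd(d,k)} m · μ(d/m), where μ is the Möbius function and φ is Euler's totient function. -/
/-!
For fixed `k`, both sides are multiplicative functions of `d`: the right side is the Dirichlet
convolution of `μ` with `m ↦ m · [m ∣ k]`, and on the left `gcd (a * b) k = gcd a k * gcd b k`
for coprime `a`, `b`. So it suffices to compare them at `d = p ^ n`, where `gcd d k = p ^ j` and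
only the terms `m = p ^ (n - 1)` and `m = p ^ n` of the sum can survive, since `μ` vanishes on
higher prime powers.
-/

open ArithmeticFunction Finset

namespace ArithmeticFunction

def idOnDivisors (k : ℕ) : ArithmeticFunction ℚ :=
  ⟨fun m => if m ∣ k then (m : ℚ) else 0, by simp⟩

theorem idOnDivisors_apply (k m : ℕ) :
    idOnDivisors k m = if m ∣ k then (m : ℚ) else 0 := rfl

theorem isMultiplicative_idOnDivisors (k : ℕ) : (idOnDivisors k).IsMultiplicative := by
  refine ⟨by simp [idOnDivisors_apply], fun {a b} hab => ?_⟩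
  have hdvd : a * b ∣ k ↔ a ∣ k ∧ b ∣ k :=
    ⟨fun h => ⟨dvd_of_mul_right_dvd h, dvd_of_mul_left_dvd h⟩,
      fun h => hab.mul_dvd_of_dvd_of_dvd h.1 h.2⟩
  simp only [idOnDivisors_apply, hdvd, Nat.cast_mul, ite_and]
  split_ifs <;> simp

theorem idOnDivisors_mul_moebius_apply (k d : ℕ) :
    (idOnDivisors k * moebius) d =
      ∑ m ∈ (d.gcd k).divisors, (m : ℚ) * (moebius (d / m) : ℚ) := by
  rcases eq_or_ne d 0 with rfl | hd
  · simp
  rw [mul_apply,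
    Nat.sum_divisorsAntidiagonal fun a b => idOnDivisors k a * (moebius : ArithmeticFunction ℚ) b,
    ← Nat.divisors_filter_dvd_of_dvd hd (Nat.gcd_dvd_left d k), sum_filter]
  refine sum_congr rfl fun m hm => ?_
  simp [idOnDivisors_apply, Nat.dvd_gcd_iff, Nat.dvd_of_mem_divisors hm]

def holderRatio (k : ℕ) : ArithmeticFunction ℚ :=
  ⟨fun d => (d.totient : ℚ) * (moebius (d / d.gcd k) : ℚ) / ((d / d.gcd k).totient : ℚ),
    by simp⟩

theorem holderRatio_apply (k d : ℕ) :
    holderRatio k d =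
      (d.totient : ℚ) * (moebius (d / d.gcd k) : ℚ) / ((d / d.gcd k).totient : ℚ) := rfl

theorem isMultiplicative_holderRatio (k : ℕ) : (holderRatio k).IsMultiplicative := by
  refine ⟨by simp [holderRatio_apply], fun {a b} hab => ?_⟩
  have hgcd : (a * b).gcd k = a.gcd k * b.gcd k := by
    rw [Nat.gcd_comm, Nat.Coprime.gcd_mul k hab, Nat.gcd_comm k, Nat.gcd_comm k]
  have hquot : a * b / (a.gcd k * b.gcd k) = a / a.gcd k * (b / b.gcd k) :=
    (Nat.div_mul_div_comm (Nat.gcd_dvd_left a k) (Nat.gcd_dvd_left b k)).symm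
  have hcop : (a / a.gcd k).Coprime (b / b.gcd k) :=
    hab.of_dvd (Nat.div_dvd_of_dvd (Nat.gcd_dvd_left a k))
      (Nat.div_dvd_of_dvd (Nat.gcd_dvd_left b k))
  simp only [holderRatio_apply, hgcd, hquot, Nat.totient_mul hab, Nat.totient_mul hcop,
    isMultiplicative_moebius.map_mul_of_coprime hcop]
  push_cast
  ring

theorem sum_range_pow_mul_moebius_prime_pow_div_eq_zero {p m n : ℕ} (hp : p.Prime) (h : m < n) :
    ∑ i ∈ range m, ((p ^ i : ℕ) : ℚ) * (moebius (p ^ n / p ^ i) : ℚ) = 0 := by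
  refine sum_eq_zero fun i hi => ?_
  have hi : i < m := mem_range.1 hi
  rw [Nat.pow_div (by omega) hp.pos, moebius_apply_prime_pow hp (by omega), if_neg (by omega)]
  simp

theorem holder_prime_pow {p n g : ℕ} (hp : p.Prime) (hg : g ∣ p ^ n) :
    ((p ^ n).totient : ℚ) * (moebius (p ^ n / g) : ℚ) / ((p ^ n / g).totient : ℚ)
      = ∑ m ∈ g.divisors, (m : ℚ) * (moebius (p ^ n / m) : ℚ) := by
  obtain ⟨j, hj, rfl⟩ := (Nat.dvd_prime_pow hp).1 hg
  obtain ⟨c, rfl⟩ := Nat.exists_eq_add_of_le hj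
  rw [Nat.sum_divisors_prime_pow hp, Nat.pow_div hj hp.pos, Nat.add_sub_cancel_left]
  rcases c with _ | _ | c
  · rcases j with _ | j
    · simp
    rw [sum_range_succ, sum_range_succ,
      sum_range_pow_mul_moebius_prime_pow_div_eq_zero hp (by omega),
      Nat.div_self (pow_pos hp.pos _), Nat.pow_div (by omega) hp.pos, Nat.add_zero,
      Nat.add_sub_cancel_left, pow_one, Nat.totient_prime_pow_succ hp]
    simp [moebius_apply_prime hp, hp.one_le]
    ring
  · rw [sum_range_succ, sum_range_pow_mul_moebius_prime_pow_div_eq_zero hp (by omega),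
      Nat.pow_div (by omega) hp.pos, Nat.add_sub_cancel_left, pow_one, moebius_apply_prime hp,
      Nat.totient_prime_pow_succ hp, Nat.totient_prime hp]
    have hp1 : ((p - 1 : ℕ) : ℚ) ≠ 0 :=
      Nat.cast_ne_zero.2 (Nat.sub_ne_zero_of_lt hp.one_lt)
    field_simp
    push_cast
    ring
  · rw [moebius_apply_prime_pow hp (by omega), if_neg (by omega),
      sum_range_pow_mul_moebius_prime_pow_div_eq_zero hp (by omega)]
    simp

theorem holderRatio_eq_idOnDivisors_mul_moebius (k : ℕ) :
    holderRatio k = idOnDivisors k * moebius := by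
  refine (IsMultiplicative.eq_iff_eq_on_prime_powers _ (isMultiplicative_holderRatio k) _
    ((isMultiplicative_idOnDivisors k).mul isMultiplicative_moebius.intCast)).2 fun p n hp => ?_
  rw [holderRatio_apply, idOnDivisors_mul_moebius_apply]
  exact holder_prime_pow hp (Nat.gcd_dvd_left _ _)

end ArithmeticFunction

theorem ramanujan_sum_holder_general (d k : ℕ) :
    (Nat.totient d : ℚ) * (moebius (d / Nat.gcd d k) : ℚ) /
      (Nat.totient (d / Nat.gcd d k) : ℚ)
      = ∑ m ∈ (Nat.gcd d k).divisors, (m : ℚ) * (moebius (d / m) : ℚ) := by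
  rw [← holderRatio_apply, holderRatio_eq_idOnDivisors_mul_moebius,
    idOnDivisors_mul_moebius_apply]

theorem ramanujan_sum_holder (d k : ℕ) (hd : 0 < d) (hk : 0 < k) :
    (Nat.totient d : ℚ) * (moebius (d / Nat.gcd d k) : ℚ) /
      (Nat.totient (d / Nat.gcd d k) : ℚ)
      = ∑ m ∈ (Nat.gcd d k).divisors, (m : ℚ) * (moebius (d / m) : ℚ) :=
  ramanujan_sum_holder_general d k
end

section
/- For all positive integers d and k, the sum of the k-th powers of all primitive d-th roots of unity in ℂ equals ∑_{m | gcd(d,k)} m · μ(d/m). -/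
/-!
Summing `z ^ k` over all `n`-th roots of unity is a geometric sum, equal to `n` if `n ∣ k` and to
`0` otherwise. Grouping the roots by their order writes this as the sum over `m ∣ n` of the sums
over primitive `m`-th roots, and Möbius inversion on the divisors of `n` (each `m ∣ n` has the
primitive root `ζ ^ (n / m)`) recovers the sum over primitive `n`-th roots.
-/

open ArithmeticFunction Finset Polynomial

namespace IsPrimitiveRoot

variable {R : Type*} [CommRing R] [IsDomain R] {ζ : R} {n : ℕ}

theorem sum_nthRootsFinset_pow (hζ : IsPrimitiveRoot ζ n) (k : ℕ) :
    ∑ z ∈ nthRootsFinset n (1 : R), z ^ k = if n ∣ k then (n : R) else 0 := by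
  classical
  have hsum : ∑ z ∈ nthRootsFinset n (1 : R), z ^ k = ∑ j ∈ range n, (ζ ^ k) ^ j := by
    rw [sum_eq_multiset_sum, sum_eq_multiset_sum, nthRootsFinset_def, Multiset.toFinset_val,
      hζ.nthRoots_one_nodup.dedup, hζ.nthRoots_eq (one_pow n), Multiset.map_map, range_val]
    simp [← pow_mul, mul_comm]
  rw [hsum]
  split_ifs with hnk
  · simp [(hζ.pow_eq_one_iff_dvd k).2 hnk]
  · have hne : ζ ^ k - 1 ≠ 0 := sub_ne_zero.2 fun h ↦ hnk ((hζ.pow_eq_one_iff_dvd k).1 h)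
    refine (mul_eq_zero.1 ?_).resolve_right hne
    rw [geom_sum_mul, ← pow_mul, mul_comm, pow_mul, hζ.pow_eq_one, one_pow, sub_self]

theorem sum_divisors_sum_primitiveRoots_pow (hζ : IsPrimitiveRoot ζ n) (k : ℕ) :
    ∑ i ∈ n.divisors, ∑ z ∈ primitiveRoots i R, z ^ k = if n ∣ k then (n : R) else 0 := by
  classical
  rw [← hζ.sum_nthRootsFinset_pow k, nthRoots_one_eq_biUnion_primitiveRoots,
    sum_biUnion fun _ _ _ _ hij ↦ disjoint hij]

theorem sum_primitiveRoots_pow (hζ : IsPrimitiveRoot ζ n) (hn : 0 < n) (k : ℕ) :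
    ∑ z ∈ primitiveRoots n R, z ^ k = ∑ m ∈ (n.gcd k).divisors, (m : R) * moebius (n / m) := by
  have hinversion := (sum_eq_iff_sum_mul_moebius_eq_on {m | m ∣ n} fun _ _ ↦ dvd_trans).1
    (fun _ _ hmn ↦
      (hζ.pow hn (Nat.div_mul_cancel hmn).symm).sum_divisors_sum_primitiveRoots_pow k) n hn dvd_rfl
  rw [← hinversion,
    Nat.sum_divisorsAntidiagonal' fun a b ↦ (moebius a : R) * if b ∣ k then (b : R) else 0,
    ← Nat.divisors_filter_dvd_of_dvd hn.ne' (Nat.gcd_dvd_left n k), sum_filter]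
  refine sum_congr rfl fun m hm ↦ ?_
  rw [mul_comm, ite_mul, zero_mul]
  simp only [Nat.dvd_gcd_iff, Nat.dvd_of_mem_divisors hm, true_and]

end IsPrimitiveRoot

theorem ramanujan_sum_primitive_roots_general (d k : ℕ) :
    ∑ z ∈ primitiveRoots d ℂ, z ^ k
      = ∑ m ∈ (Nat.gcd d k).divisors, (m : ℂ) * (moebius (d / m) : ℂ) := by
  rcases d.eq_zero_or_pos with rfl | hd
  · simp -- `primitiveRoots 0 ℂ = ∅` and `μ 0 = 0`
  · exact (Complex.isPrimitiveRoot_exp d hd.ne').sum_primitiveRoots_pow hd k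

theorem ramanujan_sum_primitive_roots (d k : ℕ) (hd : 0 < d) (hk : 0 < k) :
    ∑ z ∈ primitiveRoots d ℂ, z ^ k
      = ∑ m ∈ (Nat.gcd d k).divisors, (m : ℂ) * (moebius (d / m) : ℂ) :=
  ramanujan_sum_primitive_roots_general d k
end

section
/- Let r and n be positive integers with r | n and gcd(r, n/r) = 1. Then (1/n) · ∑_{d|n} φ(d) · μ(d/gcd(d,r)) / φ(d/gcd(d,r)) equals 1 if n = r and equals 0 otherwise. -/
/-!
The Ramanujan sum `c_d(r)` is multiplicative in `d`, so the divisor sum over `n = r m` with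
`gcd(r, m) = 1` factors as the sum over `d ∣ r` times the sum over `d ∣ m`. For `d ∣ r` the
summand is `φ(d)`, and those add up to `r`; for `d ∣ m` it is `μ(d)`, and those add up to
`[m = 1]`. Hence the sum is `r · [n = r]`.
-/

open ArithmeticFunction Finset

theorem Nat.Coprime.mul_div_gcd {a b : ℕ} (r : ℕ) (h : a.Coprime b) :
    a * b / (a * b).gcd r = a / a.gcd r * (b / b.gcd r) := by
  rw [Nat.gcd_comm, h.gcd_mul, Nat.gcd_comm r, Nat.gcd_comm r,
    Nat.div_mul_div_comm (Nat.gcd_dvd_left a r) (Nat.gcd_dvd_left b r)]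

namespace ArithmeticFunction

theorem IsMultiplicative.sum_divisors_mul_of_coprime {R : Type*} [CommSemiring R]
    {f : ArithmeticFunction R} (hf : f.IsMultiplicative) {a b : ℕ} (h : a.Coprime b) :
    ∑ d ∈ (a * b).divisors, f d = (∑ d ∈ a.divisors, f d) * ∑ d ∈ b.divisors, f d := by
  simpa only [coe_zeta_mul_apply] using
    (isMultiplicative_zeta.natCast.mul hf).map_mul_of_coprime h

/-- `ramanujanSum r d` is `c_d(r)`, in von Sterneck's closed form. -/
def ramanujanSum (r : ℕ) : ArithmeticFunction ℚ :=
  ⟨fun d => (Nat.totient d : ℚ) * (moebius (d / d.gcd r) : ℚ) /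
      (Nat.totient (d / d.gcd r) : ℚ), by simp⟩

theorem ramanujanSum_apply (r d : ℕ) :
    ramanujanSum r d = (Nat.totient d : ℚ) * (moebius (d / d.gcd r) : ℚ) /
      (Nat.totient (d / d.gcd r) : ℚ) := rfl

theorem isMultiplicative_ramanujanSum (r : ℕ) : (ramanujanSum r).IsMultiplicative := by
  refine ⟨by simp [ramanujanSum_apply], fun {a b} hab => ?_⟩
  have hdiv : (a / a.gcd r).Coprime (b / b.gcd r) :=
    hab.of_dvd (Nat.div_dvd_of_dvd (Nat.gcd_dvd_left a r))
      (Nat.div_dvd_of_dvd (Nat.gcd_dvd_left b r))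
  simp only [ramanujanSum_apply, hab.mul_div_gcd, Nat.totient_mul hab, Nat.totient_mul hdiv,
    isMultiplicative_moebius.map_mul_of_coprime hdiv]
  push_cast
  ring

theorem ramanujanSum_of_dvd {r d : ℕ} (h : d ∣ r) : ramanujanSum r d = Nat.totient d := by
  rcases eq_or_ne d 0 with rfl | hd
  · simp
  · simp [ramanujanSum_apply, Nat.gcd_eq_left h, Nat.div_self (Nat.pos_of_ne_zero hd)]

theorem ramanujanSum_of_coprime {r d : ℕ} (h : d.Coprime r) : ramanujanSum r d = moebius d := by
  rcases eq_or_ne d 0 with rfl | hd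
  · simp
  · have hφ : (Nat.totient d : ℚ) ≠ 0 := by exact_mod_cast (Nat.totient_pos.mpr hd.bot_lt).ne'
    rw [ramanujanSum_apply, Nat.Coprime.gcd_eq_one h, Nat.div_one, mul_div_cancel_left₀ _ hφ]

theorem sum_divisors_ramanujanSum_self (r : ℕ) : ∑ d ∈ r.divisors, ramanujanSum r d = r := by
  rw [sum_congr rfl fun d hd => ramanujanSum_of_dvd (Nat.dvd_of_mem_divisors hd)]
  exact_mod_cast Nat.sum_totient r

theorem sum_divisors_ramanujanSum_of_coprime {r m : ℕ} (h : m.Coprime r) :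
    ∑ d ∈ m.divisors, ramanujanSum r d = if m = 1 then 1 else 0 := by
  rw [sum_congr rfl fun d hd => ramanujanSum_of_coprime (h.coprime_dvd_left
    (Nat.dvd_of_mem_divisors hd))]
  simpa only [coe_mul_zeta_apply, intCoe_apply, one_apply] using
    congrArg (· m) (coe_moebius_mul_coe_zeta (R := ℚ))

end ArithmeticFunction

theorem foulkes_char_sum_general (r n : ℕ) (hrn : r ∣ n)
    (hcop : Nat.Coprime r (n / r)) :
    (1 / n : ℚ) * ∑ d ∈ n.divisors,
        (Nat.totient d : ℚ) * (moebius (d / Nat.gcd d r) : ℚ) /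
          (Nat.totient (d / Nat.gcd d r) : ℚ)
      = if n = r then 1 else 0 := by
  have hrm : r * (n / r) = n := Nat.mul_div_cancel' hrn
  have hsum : ∑ d ∈ n.divisors, ramanujanSum r d = if n / r = 1 then (r : ℚ) else 0 := by
    rw [← hrm, (isMultiplicative_ramanujanSum r).sum_divisors_mul_of_coprime hcop,
      sum_divisors_ramanujanSum_self, sum_divisors_ramanujanSum_of_coprime hcop.symm, hrm]
    simp
  change (1 / n : ℚ) * ∑ d ∈ n.divisors, ramanujanSum r d = _
  rw [hsum]
  by_cases hnr : n = r
  · subst hnr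
    have hn0 : n ≠ 0 := by rintro rfl; simp at hcop
    simp [hn0, Nat.div_self (Nat.pos_of_ne_zero hn0)]
  · have hm : n / r ≠ 1 := fun hm => hnr (by rw [← hrm, hm, mul_one])
    simp [hnr, hm]

theorem foulkes_char_sum (r n : ℕ) (hr : 0 < r) (hn : 0 < n) (hrn : r ∣ n)
    (hcop : Nat.Coprime r (n / r)) :
    (1 / n : ℚ) * ∑ d ∈ n.divisors,
        (Nat.totient d : ℚ) * (moebius (d / Nat.gcd d r) : ℚ) /
          (Nat.totient (d / Nat.gcd d r) : ℚ)
      = if n = r then 1 else 0 :=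
  foulkes_char_sum_general r n hrn hcop
end

section
/- Let S be a set of primes with 2 ∈ S, and define ψ(d) = φ(Q_d)·μ(ℓ_d), where Q_d is the S-part and ℓ_d the S-free part of d. Then for every positive integer n, ∑_{d|n} ψ(d)·(-1)^{n/d} = -n if n is odd and n ∈ P(S), and ∑_{d|n} ψ(d)·(-1)^{n/d} = 0 otherwise. -/
/-!
Write `ψ(d) = φ(Q_d) μ(ℓ_d)`. Since `ψ` is multiplicative, `Ψ(n) = ∑_{d ∣ n} ψ(d)` can be computed
on prime powers, where it is `∑ φ = p^k` for `p ∈ S` and `∑ μ = 0` otherwise; hence `Ψ(n) = n` for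
`n ∈ P(S)` and `Ψ(n) = 0` otherwise. Writing `(-1)^k = 2·[2 ∣ k] - 1`, the signed sum equals
`-Ψ(n)` for odd `n` and `2Ψ(m) - Ψ(2m)` for `n = 2m`; the latter vanishes because `2 ∈ S` gives
`2m ∈ P(S) ↔ m ∈ P(S)`.
-/

open ArithmeticFunction Finset
open scoped ArithmeticFunction.zeta ArithmeticFunction.Moebius

/-- The `S`-part of `d`: the largest divisor of `d` all of whose prime factors lie in `S`. -/
def Spart (S : Set ℕ) [DecidablePred (· ∈ S)] (d : ℕ) : ℕ :=
  ∏ p ∈ d.primeFactors.filter (· ∈ S), p ^ d.factorization p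

namespace Spart

variable (S : Set ℕ) [DecidablePred (· ∈ S)]

theorem eq_prod_factorization (d : ℕ) :
    Spart S d = d.factorization.prod fun p k => if p ∈ S then p ^ k else 1 := by
  rw [Spart, Nat.prod_factorization_eq_prod_primeFactors, prod_filter]

@[simp]
theorem one : Spart S 1 = 1 := by simp [Spart]

theorem dvd_self (d : ℕ) : Spart S d ∣ d := by
  rcases eq_or_ne d 0 with rfl | hd
  · exact dvd_zero _
  conv_rhs => rw [← Nat.prod_factorization_pow_eq_self hd]
  rw [eq_prod_factorization]
  refine prod_dvd_prod_of_dvd _ _ fun p _ => ?_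
  dsimp only
  split_ifs
  exacts [dvd_rfl, one_dvd _]

theorem mul {m n : ℕ} (hm : m ≠ 0) (hn : n ≠ 0) : Spart S (m * n) = Spart S m * Spart S n := by
  simp only [eq_prod_factorization, Nat.factorization_mul hm hn]
  refine Finsupp.prod_add_index' (fun _ => by simp) fun p a b => ?_
  split_ifs
  exacts [pow_add p a b, (mul_one 1).symm]

theorem prime_pow {p : ℕ} (hp : p.Prime) (k : ℕ) :
    Spart S (p ^ k) = if p ∈ S then p ^ k else 1 := by
  rw [eq_prod_factorization, hp.factorization_pow, Finsupp.prod_single_index (by simp)]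

end Spart

section psi

variable (S : Set ℕ) [DecidablePred (· ∈ S)]

def psi : ArithmeticFunction ℤ :=
  ⟨fun d => (Nat.totient (Spart S d) : ℤ) * μ (d / Spart S d), by simp⟩

theorem psi_apply (d : ℕ) : psi S d = (Nat.totient (Spart S d) : ℤ) * μ (d / Spart S d) := rfl

theorem isMultiplicative_psi : (psi S).IsMultiplicative := by
  rw [IsMultiplicative.iff_ne_zero]
  refine ⟨by simp [psi_apply], fun {m n} hm hn hmn => ?_⟩
  have hSm := Spart.dvd_self S m
  have hSn := Spart.dvd_self S n
  have hcopS : (Spart S m).Coprime (Spart S n) := (hmn.coprime_dvd_left hSm).coprime_dvd_right hSn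
  have hcopL : (m / Spart S m).Coprime (n / Spart S n) :=
    (hmn.coprime_dvd_left (Nat.div_dvd_of_dvd hSm)).coprime_dvd_right (Nat.div_dvd_of_dvd hSn)
  rw [psi_apply, psi_apply, psi_apply, Spart.mul S hm hn, ← Nat.div_mul_div_comm hSm hSn,
    Nat.totient_mul hcopS, isMultiplicative_moebius.map_mul_of_coprime hcopL]
  push_cast
  ring

theorem psi_prime_pow {p : ℕ} (hp : p.Prime) (k : ℕ) :
    psi S (p ^ k) = if p ∈ S then (Nat.totient (p ^ k) : ℤ) else μ (p ^ k) := by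
  rw [psi_apply, Spart.prime_pow S hp]
  split_ifs
  · simp [Nat.div_self (pow_pos hp.pos k)]
  · simp

theorem sum_divisors_psi_prime_pow {p k : ℕ} (hp : p.Prime) (hk : k ≠ 0) :
    ∑ d ∈ (p ^ k).divisors, psi S d = if p ∈ S then (p : ℤ) ^ k else 0 := by
  rw [Nat.sum_divisors_prime_pow hp]
  simp only [psi_prime_pow S hp]
  split_ifs
  · rw [← Nat.cast_sum, ← Nat.sum_divisors_prime_pow hp, Nat.sum_totient, Nat.cast_pow]
  · rw [← Nat.sum_divisors_prime_pow hp (f := fun d => (μ d : ℤ)), ← coe_mul_zeta_apply,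
      moebius_mul_coe_zeta, one_apply_ne (Nat.one_lt_pow hk hp.one_lt).ne']

theorem sum_divisors_psi (m : ℕ) :
    ∑ d ∈ m.divisors, psi S d = if ∀ p ∈ m.primeFactors, p ∈ S then (m : ℤ) else 0 := by
  rcases eq_or_ne m 0 with rfl | hm
  · simp
  have hmul : (psi S * ζ).IsMultiplicative :=
    (isMultiplicative_psi S).mul isMultiplicative_zeta.natCast
  rw [← coe_mul_zeta_apply, hmul.multiplicative_factorization _ hm,
    Nat.prod_factorization_eq_prod_primeFactors]
  have hfactor : ∀ p ∈ m.primeFactors, (psi S * ζ) (p ^ m.factorization p)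
      = if p ∈ S then ((p ^ m.factorization p : ℕ) : ℤ) else 0 := fun p hp => by
    rw [coe_mul_zeta_apply, sum_divisors_psi_prime_pow S (Nat.prime_of_mem_primeFactors hp)
      (Finsupp.mem_support_iff.mp (by rwa [Nat.support_factorization])), Nat.cast_pow]
  rw [prod_congr rfl hfactor, prod_ite_zero, ← Nat.cast_prod,
    ← Nat.prod_factorization_eq_prod_primeFactors, Nat.prod_factorization_pow_eq_self hm]

end psi

theorem forall_mem_primeFactors_mul_iff {S : Set ℕ} {q : ℕ} (hq : q.Prime) (hqS : q ∈ S)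
    (m : ℕ) : (∀ p ∈ (q * m).primeFactors, p ∈ S) ↔ ∀ p ∈ m.primeFactors, p ∈ S := by
  rcases eq_or_ne m 0 with rfl | hm
  · simp
  simp [Nat.primeFactors_mul hq.ne_zero hm, hq.primeFactors, hqS]

theorem divisors_mul_filter_dvd_div {k : ℕ} (hk : k ≠ 0) (m : ℕ) :
    (k * m).divisors.filter (fun d => k ∣ k * m / d) = m.divisors := by
  ext d
  simp only [mem_filter, Nat.mem_divisors, mul_ne_zero_iff, ne_eq, hk, not_false_eq_true,
    true_and]
  constructor
  · rintro ⟨⟨⟨e, he⟩, hm⟩, hke⟩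
    have hd : 0 < d := Nat.pos_of_ne_zero fun h => by simp [h, hk, hm] at he
    rw [he, Nat.mul_div_cancel_left e hd] at hke
    obtain ⟨j, rfl⟩ := hke
    refine ⟨⟨j, Nat.eq_of_mul_eq_mul_left (Nat.pos_of_ne_zero hk) ?_⟩, hm⟩
    rw [he]
    ring
  · rintro ⟨⟨j, rfl⟩, hm⟩
    have hd : 0 < d := Nat.pos_of_ne_zero (left_ne_zero_of_mul hm)
    refine ⟨⟨⟨k * j, by ring⟩, hm⟩, ?_⟩
    rw [show k * (d * j) = d * (k * j) by ring, Nat.mul_div_cancel_left _ hd]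
    exact dvd_mul_right k j

section neg_one_pow

variable {R : Type*} [CommRing R] (f : ℕ → R)

theorem sum_divisors_mul_neg_one_pow_div_of_odd {n : ℕ} (hn : Odd n) :
    ∑ d ∈ n.divisors, f d * (-1) ^ (n / d) = -∑ d ∈ n.divisors, f d := by
  rw [← sum_neg_distrib]
  refine sum_congr rfl fun d hd => ?_
  rw [(hn.of_dvd_nat (Nat.div_dvd_of_dvd (Nat.dvd_of_mem_divisors hd))).neg_one_pow, mul_neg_one]

theorem sum_divisors_mul_neg_one_pow_div_two_mul (m : ℕ) :
    ∑ d ∈ (2 * m).divisors, f d * (-1) ^ (2 * m / d)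
      = 2 * ∑ d ∈ m.divisors, f d - ∑ d ∈ (2 * m).divisors, f d := by
  have hsign : ∀ k : ℕ, (-1 : R) ^ k = 2 * (if 2 ∣ k then 1 else 0) - 1 := fun k => by
    rcases Nat.even_or_odd k with he | ho
    · rw [he.neg_one_pow, if_pos he.two_dvd]
      ring
    · rw [ho.neg_one_pow, if_neg (Nat.not_even_iff_odd.mpr ho ∘ even_iff_two_dvd.mpr)]
      ring
  rw [← divisors_mul_filter_dvd_div two_ne_zero m, sum_filter, mul_sum, ← sum_sub_distrib]
  refine sum_congr rfl fun d _ => ?_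
  rw [hsign]
  split_ifs <;> ring

end neg_one_pow

theorem sum_psi_neg_one_pow_two_mem_general (S : Set ℕ) [DecidablePred (· ∈ S)]
    (h2 : 2 ∈ S) (n : ℕ) :
    ∑ d ∈ n.divisors,
        (Nat.totient (Spart S d) : ℤ) * moebius (d / Spart S d) * (-1) ^ (n / d)
      = if Odd n ∧ ∀ p ∈ n.primeFactors, p ∈ S then -(n : ℤ) else 0 := by
  simp only [← psi_apply]
  obtain ⟨m, rfl | rfl⟩ := Nat.even_or_odd' n
  · have heven : ¬ Odd (2 * m) := Nat.not_odd_iff_even.mpr (even_two_mul m)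
    rw [sum_divisors_mul_neg_one_pow_div_two_mul, sum_divisors_psi, sum_divisors_psi]
    simp only [forall_mem_primeFactors_mul_iff Nat.prime_two h2, heven, false_and, if_false]
    split_ifs
    · push_cast
      ring
    · ring
  · rw [sum_divisors_mul_neg_one_pow_div_of_odd _ (odd_two_mul_add_one m), sum_divisors_psi]
    simp only [odd_two_mul_add_one, true_and]
    split_ifs
    · rfl
    · exact neg_zero

theorem sum_psi_neg_one_pow_two_mem (S : Set ℕ) [DecidablePred (· ∈ S)]
    (hS : ∀ q ∈ S, Nat.Prime q) (h2 : 2 ∈ S) (n : ℕ) (hn : 0 < n) :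
    ∑ d ∈ n.divisors,
        (Nat.totient (Spart S d) : ℤ) * moebius (d / Spart S d) * (-1) ^ (n / d)
      = if Odd n ∧ ∀ p ∈ n.primeFactors, p ∈ S then -(n : ℤ) else 0 :=
  sum_psi_neg_one_pow_two_mem_general S h2 n
end

section
/- Let q be a prime and n = ℓ·q^k with q ∤ ℓ. Define ψ(d) = φ(q^{v}) · μ(d/q^{v}) where q^v is the exact power of q dividing d. Then in ℚ[X_1, X_2, ...]: ∑_{d|n} ψ(d)·X_d^{n/d} = ∑_{r=0}^{k} q^r · ∑_{e | ℓ·q^{k-r}} μ(e) · X_{q^r · e}^{(ℓ·q^{k-r})/e}. -/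
open ArithmeticFunction Finset MvPolynomial

open scoped ArithmeticFunction.Moebius Nat

/-!
ψ is the Dirichlet convolution of μ with `q ^ r ↦ q ^ r` (supported on powers of `q`): writing
`d = q ^ v * m` with `q ∤ m`, multiplicativity of μ gives
`∑_{r ≤ v} q ^ r μ(d / q ^ r) = μ(m) ∑_{r ≤ v} q ^ r μ(q ^ (v - r)) = μ(m) φ(q ^ v)`.
Substituting `d = q ^ r * e` on the right-hand side and exchanging the sums over `r` and `d` turns it
into `∑_{d ∣ n} ψ(d) X_d ^ (n / d)`; since `q ∤ ℓ`, every divisor `d` of `n` has `v_q(d) ≤ k`, so the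
range `r ≤ k` cuts off none of the terms `r ≤ v_q(d)`.
-/

lemma sum_pow_mul_moebius_prime_pow {q : ℕ} (hq : q.Prime) (v : ℕ) :
    ∑ r ∈ range (v + 1), (q : ℤ) ^ r * μ (q ^ (v - r)) = φ (q ^ v) := by
  cases v with
  | zero => simp
  | succ s =>
    have hvanish : ∀ r ∈ range s, (q : ℤ) ^ r * μ (q ^ (s + 1 - r)) = 0 := fun r hr => by
      have hrs := mem_range.mp hr
      rw [moebius_apply_prime_pow hq (by omega), if_neg (by omega), mul_zero]
    rw [sum_range_succ, sum_range_succ, sum_eq_zero hvanish, Nat.totient_prime_pow_succ hq,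
      Nat.sub_self, Nat.succ_sub (le_refl s), Nat.sub_self, pow_zero, pow_one,
      moebius_apply_prime hq, moebius_apply_one]
    push_cast [Nat.cast_sub hq.one_le]
    ring

lemma sum_pow_mul_moebius_div_pow {q d : ℕ} (hq : q.Prime) (hd : d ≠ 0) :
    ∑ r ∈ range (d.factorization q + 1), (q : ℤ) ^ r * μ (d / q ^ r) =
      φ (q ^ d.factorization q) * μ (d / q ^ d.factorization q) := by
  set v := d.factorization q
  set m := d / q ^ v
  have hm : Nat.Coprime q m := Nat.coprime_ordCompl hq hd
  have hsplit : ∀ r ∈ range (v + 1), μ (d / q ^ r) = μ (q ^ (v - r)) * μ m := fun r hr => by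
    have hrv : r ≤ v := Nat.lt_succ_iff.mp (mem_range.mp hr)
    have : d / q ^ r = q ^ (v - r) * m := by
      refine Nat.div_eq_of_eq_mul_left (pow_pos hq.pos r) ?_
      rw [mul_right_comm, ← pow_add, Nat.sub_add_cancel hrv]
      exact (Nat.ordProj_mul_ordCompl_eq_self d q).symm
    rw [this, isMultiplicative_moebius.map_mul_of_coprime (hm.pow_left _)]
  rw [sum_congr rfl fun r hr => by rw [hsplit r hr, ← mul_assoc], ← sum_mul,
    sum_pow_mul_moebius_prime_pow hq]

lemma factorization_le_of_dvd_mul_prime_pow {q ℓ k d : ℕ} (hq : q.Prime) (hql : ¬ q ∣ ℓ)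
    (hd : d ∣ ℓ * q ^ k) : d.factorization q ≤ k := by
  have hcop : Nat.Coprime (q ^ d.factorization q) ℓ :=
    ((Nat.Prime.coprime_iff_not_dvd hq).mpr hql).pow_left _
  have : q ^ d.factorization q ∣ q ^ k :=
    hcop.dvd_of_dvd_mul_left ((Nat.ordProj_dvd d q).trans hd)
  exact (Nat.pow_dvd_pow_iff_le_right hq.one_lt).mp this

lemma filter_pow_dvd_range {q d k : ℕ} (hq : q.Prime) (hd : d ≠ 0) (hk : d.factorization q ≤ k) :
    {r ∈ range (k + 1) | q ^ r ∣ d} = range (d.factorization q + 1) := by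
  ext r
  simp only [mem_filter, mem_range, hq.pow_dvd_iff_le_factorization hd]
  omega

lemma totient_mul_moebius_eq_sum_filter_pow_dvd {q ℓ k d : ℕ} (hq : q.Prime) (hql : ¬ q ∣ ℓ)
    (hd : d ∈ (ℓ * q ^ k).divisors) :
    (φ (q ^ d.factorization q) : ℤ) * μ (d / q ^ d.factorization q) =
      ∑ r ∈ range (k + 1) with q ^ r ∣ d, (q : ℤ) ^ r * μ (d / q ^ r) := by
  have hd0 : d ≠ 0 := Nat.ne_of_gt (Nat.pos_of_mem_divisors hd)
  rw [filter_pow_dvd_range hq hd0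
    (factorization_le_of_dvd_mul_prime_pow hq hql (Nat.dvd_of_mem_divisors hd)),
    sum_pow_mul_moebius_div_pow hq hd0]

lemma sum_divisors_div_eq_sum_filter_dvd {M : Type*} [AddCommMonoid M] {m n : ℕ} (hmn : m ∣ n)
    (f : ℕ → ℕ → M) :
    ∑ e ∈ (n / m).divisors, f e (n / m / e) = ∑ d ∈ n.divisors with m ∣ d, f (d / m) (n / d) := by
  rcases eq_or_ne n 0 with rfl | hn
  · simp
  have hm : 0 < m := Nat.pos_of_dvd_of_pos hmn (Nat.pos_of_ne_zero hn)
  refine sum_nbij' (m * ·) (· / m) (fun e he => ?_) (fun d hd => ?_) (fun e _ => ?_)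
    (fun d hd => ?_) (fun e _ => ?_)
  · simp only [mem_filter, Nat.mem_divisors, dvd_mul_right, and_true] at he ⊢
    exact ⟨Nat.mul_dvd_of_dvd_div hmn he.1, hn⟩
  · simp only [mem_filter, Nat.mem_divisors] at hd ⊢
    refine ⟨Nat.div_dvd_div hd.2 hd.1.1, ?_⟩
    simp [Nat.div_eq_zero_iff, hm.ne', Nat.le_of_dvd (Nat.pos_of_ne_zero hn) hmn]
  · exact Nat.mul_div_cancel_left e hm
  · exact Nat.mul_div_cancel' (mem_filter.mp hd).2
  · simp only [Nat.mul_div_cancel_left e hm, Nat.div_div_eq_div_mul]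

theorem Lie_q_decomposition_general (q ℓ k n : ℕ) (hq : q.Prime)
    (hql : ¬ q ∣ ℓ) (hn : n = ℓ * q ^ k) :
    ∑ d ∈ n.divisors,
        (MvPolynomial.C
            ((Nat.totient (q ^ (d.factorization q)) : ℚ) *
              (moebius (d / q ^ (d.factorization q)) : ℚ)) : MvPolynomial ℕ ℚ) *
          (MvPolynomial.X d) ^ (n / d)
      = ∑ r ∈ Finset.range (k + 1),
          (MvPolynomial.C ((q : ℚ) ^ r) : MvPolynomial ℕ ℚ) *
            ∑ e ∈ (ℓ * q ^ (k - r)).divisors,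
              MvPolynomial.C ((moebius e : ℚ)) *
                (MvPolynomial.X (q ^ r * e)) ^ ((ℓ * q ^ (k - r)) / e) := by
  subst hn
  have hdvd : ∀ r ∈ range (k + 1), q ^ r ∣ ℓ * q ^ k := fun r hr =>
    (pow_dvd_pow q (Nat.lt_succ_iff.mp (mem_range.mp hr))).mul_left ℓ
  have hquot : ∀ r ∈ range (k + 1), ℓ * q ^ (k - r) = ℓ * q ^ k / q ^ r := fun r hr =>
    (Nat.div_eq_of_eq_mul_left (pow_pos hq.pos r) (by
      rw [mul_assoc, ← pow_add, Nat.sub_add_cancel (Nat.lt_succ_iff.mp (mem_range.mp hr))])).symm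
  symm
  calc _ = ∑ r ∈ range (k + 1), ∑ d ∈ (ℓ * q ^ k).divisors with q ^ r ∣ d,
          C ((q : ℚ) ^ r * μ (d / q ^ r)) * X d ^ (ℓ * q ^ k / d) := by
        refine sum_congr rfl fun r hr => ?_
        rw [hquot r hr, sum_divisors_div_eq_sum_filter_dvd (hdvd r hr)
          fun e t => (C (μ e : ℚ) : MvPolynomial ℕ ℚ) * X (q ^ r * e) ^ t, mul_sum]
        refine sum_congr rfl fun d hd => ?_
        rw [Nat.mul_div_cancel' (mem_filter.mp hd).2, map_mul, mul_assoc]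
    _ = ∑ d ∈ (ℓ * q ^ k).divisors, ∑ r ∈ range (k + 1) with q ^ r ∣ d,
          C ((q : ℚ) ^ r * μ (d / q ^ r)) * X d ^ (ℓ * q ^ k / d) := by
        simp only [sum_filter]
        exact sum_comm
    _ = _ := sum_congr rfl fun d hd => by
        rw [← sum_mul, ← map_sum]
        exact_mod_cast congrArg (fun c : ℤ => C (c : ℚ) * X d ^ (ℓ * q ^ k / d))
          (totient_mul_moebius_eq_sum_filter_pow_dvd hq hql hd).symm

theorem Lie_q_decomposition (q ℓ k n : ℕ) (hq : q.Prime) (hℓ : 0 < ℓ)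
    (hql : ¬ q ∣ ℓ) (hn : n = ℓ * q ^ k) :
    ∑ d ∈ n.divisors,
        (MvPolynomial.C
            ((Nat.totient (q ^ (d.factorization q)) : ℚ) *
              (moebius (d / q ^ (d.factorization q)) : ℚ)) : MvPolynomial ℕ ℚ) *
          (MvPolynomial.X d) ^ (n / d)
      = ∑ r ∈ Finset.range (k + 1),
          (MvPolynomial.C ((q : ℚ) ^ r) : MvPolynomial ℕ ℚ) *
            ∑ e ∈ (ℓ * q ^ (k - r)).divisors,
              MvPolynomial.C ((moebius e : ℚ)) *
                (MvPolynomial.X (q ^ r * e)) ^ ((ℓ * q ^ (k - r)) / e) :=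
  Lie_q_decomposition_general q ℓ k n hq hql hn
end
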